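/- arXiv:2602.05614 — 4 statements merged into one kernel-verified Lean document; each statement's English description precedes it below -/
import Mathlib

section
/- Let t, K₀ be positive reals with K₀ > 1, let m, r, K be positive integers with r ≥ 2 and K ≥ 2 and K ≥ K₀, and define g(x) = (t/(2π))·(log(Kr + m + x) − log(Kr + x)) for x ≥ 0, and W = π(r+1)³K³/t. Then for all real x with 0 ≤ x ≤ K − m (assuming m < K), the second derivative satisfies m/W ≤ g''(x) ≤ (m/W)·((r+1)/r)³. -/
/-!
With `u = K r + x` and `v = u + m` we have `g'' x = t / (2π) · (1 / u² - 1 / v²)`, and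
`1 / u² - 1 / v² = m · (1 / (u² v) + 1 / (u v²))`. Since `K r ≤ u ≤ v ≤ K (r + 1)` on the range of
`x`, each of the two cubic terms lies between `1 / (K (r + 1))³` and `1 / (K r)³`.
-/

open Real Filter Topology

theorem deriv_deriv_mul_log_sub_log (c a b x : ℝ) (ha : 0 < a + x) (hb : 0 < b + x) :
    deriv (deriv fun y => c * (log (a + y) - log (b + y))) x =
      c * (((b + x) ^ 2)⁻¹ - ((a + x) ^ 2)⁻¹) := by
  have hderiv : ∀ y, 0 < a + y → 0 < b + y →
      HasDerivAt (fun y => c * (log (a + y) - log (b + y))) (c * ((a + y)⁻¹ - (b + y)⁻¹)) y :=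
    fun y hay hby => (((hasDerivAt_id y).const_add a).log hay.ne' |>.sub
      (((hasDerivAt_id y).const_add b).log hby.ne')).const_mul c |>.congr_deriv (by simp)
  have heq : deriv (fun y => c * (log (a + y) - log (b + y))) =ᶠ[𝓝 x]
      fun y => c * ((a + y)⁻¹ - (b + y)⁻¹) := by
    filter_upwards [lt_mem_nhds (show -a < x by linarith), lt_mem_nhds (show -b < x by linarith)]
      with y hay hby
    exact (hderiv y (by linarith) (by linarith)).deriv
  rw [heq.deriv_eq]
  refine ((((hasDerivAt_id x).const_add a).inv ha.ne').sub
    (((hasDerivAt_id x).const_add b).inv hb.ne')).const_mul c |>.deriv.trans ?_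
  simp only [id, neg_div, one_div]
  ring

theorem inv_sq_sub_inv_sq_eq {u v : ℝ} (hu : u ≠ 0) (hv : v ≠ 0) :
    (u ^ 2)⁻¹ - (v ^ 2)⁻¹ = (v - u) * ((u ^ 2 * v)⁻¹ + (u * v ^ 2)⁻¹) := by
  field_simp
  ring

theorem mul_two_div_pow_three_le_inv_sq_sub_inv_sq {u v P : ℝ} (hu : 0 < u) (huv : u ≤ v)
    (hvP : v ≤ P) : (v - u) * 2 / P ^ 3 ≤ (u ^ 2)⁻¹ - (v ^ 2)⁻¹ := by
  have hv : 0 < v := hu.trans_le huv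
  have huP : u ≤ P := huv.trans hvP
  have hP : 0 ≤ P := hv.le.trans hvP
  rw [inv_sq_sub_inv_sq_eq hu.ne' hv.ne', mul_div_assoc, div_eq_mul_inv, two_mul]
  have hvu : 0 ≤ v - u := sub_nonneg.mpr huv
  gcongr (v - u) * (?_ + ?_)
  · rw [show P ^ 3 = P ^ 2 * P by ring]
    gcongr
  · rw [show P ^ 3 = P * P ^ 2 by ring]
    gcongr

theorem inv_sq_sub_inv_sq_le_mul_two_div_pow_three {u v Q : ℝ} (hQ : 0 < Q) (hQu : Q ≤ u)
    (huv : u ≤ v) : (u ^ 2)⁻¹ - (v ^ 2)⁻¹ ≤ (v - u) * 2 / Q ^ 3 := by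
  have hu : 0 < u := hQ.trans_le hQu
  have hv : 0 < v := hu.trans_le huv
  have hQv : Q ≤ v := hQu.trans huv
  rw [inv_sq_sub_inv_sq_eq hu.ne' hv.ne', mul_div_assoc, div_eq_mul_inv, two_mul]
  have hvu : 0 ≤ v - u := sub_nonneg.mpr huv
  gcongr (v - u) * (?_ + ?_)
  · rw [show Q ^ 3 = Q ^ 2 * Q by ring]
    gcongr
  · rw [show Q ^ 3 = Q * Q ^ 2 by ring]
    gcongr

theorem stmt_8_general (t : ℝ) (ht : 0 < t)
    (m r K : ℕ) (hr : 2 ≤ r)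
    (hmK : m < K)
    (g : ℝ → ℝ)
    (hg : g = fun x => (t / (2 * π)) * (Real.log ((K : ℝ) * r + m + x) - Real.log ((K : ℝ) * r + x)))
    (W : ℝ) (hW : W = π * ((r : ℝ) + 1) ^ 3 * (K : ℝ) ^ 3 / t) :
    ∀ x : ℝ, 0 ≤ x → x ≤ (K : ℝ) - m →
      (m : ℝ) / W ≤ deriv (deriv g) x ∧
      deriv (deriv g) x ≤ ((m : ℝ) / W) * (((r : ℝ) + 1) / r) ^ 3 := by
  intro x hx0 hxK
  have hK0 : (0 : ℝ) < K := by exact_mod_cast (Nat.zero_le m).trans_lt hmK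
  have hr0 : (0 : ℝ) < r := by exact_mod_cast (by omega : 0 < r)
  have hKr : 0 < (K : ℝ) * r + x := by positivity
  have hg'' : deriv (deriv g) x =
      t / (2 * π) * ((((K : ℝ) * r + x) ^ 2)⁻¹ - (((K : ℝ) * r + m + x) ^ 2)⁻¹) :=
    hg ▸ deriv_deriv_mul_log_sub_log _ _ _ x (by positivity) hKr
  have hsub : ((K : ℝ) * r + m + x) - ((K : ℝ) * r + x) = m := by ring
  have lower := mul_two_div_pow_three_le_inv_sq_sub_inv_sq hKr (by linarith)
    (show (K : ℝ) * r + m + x ≤ K * (r + 1) by linarith)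
  have upper := inv_sq_sub_inv_sq_le_mul_two_div_pow_three (by positivity)
    (show (K : ℝ) * r ≤ K * r + x by linarith) (show _ ≤ (K : ℝ) * r + m + x by linarith)
  rw [hsub] at lower upper
  rw [hg'', hW]
  constructor
  · calc (m : ℝ) / (π * (r + 1) ^ 3 * K ^ 3 / t)
        = t / (2 * π) * (m * 2 / (K * (r + 1)) ^ 3) := by field_simp
      _ ≤ _ := by gcongr
  · calc _ ≤ t / (2 * π) * (m * 2 / (K * r) ^ 3) := by gcongr
      _ = (m : ℝ) / (π * (r + 1) ^ 3 * K ^ 3 / t) * ((r + 1) / r) ^ 3 := by field_simp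

theorem stmt_8 (t K₀ : ℝ) (ht : 0 < t) (hK₀ : 1 < K₀)
    (m r K : ℕ) (hm : 0 < m) (hr : 2 ≤ r) (hK2 : 2 ≤ K) (hKK₀ : (K : ℝ) ≥ K₀)
    (hmK : m < K)
    (g : ℝ → ℝ)
    (hg : g = fun x => (t / (2 * π)) * (Real.log ((K : ℝ) * r + m + x) - Real.log ((K : ℝ) * r + x)))
    (W : ℝ) (hW : W = π * ((r : ℝ) + 1) ^ 3 * (K : ℝ) ^ 3 / t) :
    ∀ x : ℝ, 0 ≤ x → x ≤ (K : ℝ) - m →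
      (m : ℝ) / W ≤ deriv (deriv g) x ∧
      deriv (deriv g) x ≤ ((m : ℝ) / W) * (((r : ℝ) + 1) / r) ^ 3 :=
  stmt_8_general t ht m r K hr hmK g hg W hW
end

section
/- Let f : [N+1, N+L] → ℝ where N is an integer and L, M are positive integers. Then |∑_{n=N+1}^{N+L} e(f(n))|² ≤ ((L+M−1)/M)·(L + 2·∑_{m=1}^{M} (1 − m/M)·|s'_m(L)|), where s'_m(L) = ∑_{r=N+1}^{N+L−m} e(f(m+r) − f(r)) (an empty sum when m ≥ L). -/
/-!
Extend `u` by zero outside `[N+1, N+L]` to `g`. For every shift `1 ≤ m ≤ M` the window sum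
`∑_{a=N+1-M}^{N+L-1} g(a+m)` is the whole sum `S`, so `M S = ∑_a G a` with
`G a = ∑_{m=1}^M g(a+m)`, a sum over `L+M-1` values of `a`. Cauchy–Schwarz gives
`M² |S|² ≤ (L+M-1) ∑_a |G a|²`, and expanding `|G a|²` the pair `(m₁, m₂)` contributes the
autocorrelation of `u` at lag `m₁ - m₂`; a lag `d ≥ 1` occurs for `M - d` ordered pairs `m₂ < m₁`.
-/

open Real Complex Finset
open ComplexConjugate

theorem Finset.sum_Icc_add' {α β : Type*} [AddCommMonoid α] [PartialOrder α]
    [IsOrderedCancelAddMonoid α] [ExistsAddOfLE α] [LocallyFiniteOrder α] [AddCommMonoid β]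
    (F : α → β) (a b c : α) : ∑ x ∈ Icc a b, F (x + c) = ∑ x ∈ Icc (a + c) (b + c), F x := by
  rw [← map_add_right_Icc, sum_map]
  rfl

theorem Finset.sum_sum_eq_sum_diag_add_two_mul {α β : Type*} [LinearOrder α] [CommSemiring β]
    (s : Finset α) (φ : α → α → β) (hφ : ∀ i j, φ i j = φ j i) :
    ∑ i ∈ s, ∑ j ∈ s, φ i j = ∑ i ∈ s, φ i i + 2 * ∑ i ∈ s, ∑ j ∈ s with j < i, φ i j := by
  have hsplit : ∀ i j, φ i j =
      (if i = j then φ i j else 0) + (if j < i then φ i j else 0) + (if i < j then φ i j else 0) := by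
    intro i j
    rcases lt_trichotomy i j with h | rfl | h
    · simp [h, h.not_gt, h.ne]
    · simp
    · simp [h, h.not_gt, h.ne']
  have hupper : ∑ i ∈ s, ∑ j ∈ s, (if i < j then φ i j else 0)
      = ∑ i ∈ s, ∑ j ∈ s, (if j < i then φ i j else 0) := by
    rw [sum_comm]
    simp_rw [hφ]
  simp_rw [sum_filter]
  conv_lhs => enter [2, i, 2, j]; rw [hsplit]
  simp only [sum_add_distrib, sum_ite_eq, hupper]
  rw [sum_congr rfl fun i hi => if_pos hi]
  ring

theorem Finset.sum_Icc_sum_lt_sub_eq_sum_nsmul {β : Type*} [AddCommMonoid β] (M : ℕ) (ψ : ℕ → β) :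
    ∑ i ∈ Icc 1 M, ∑ j ∈ Icc 1 M with j < i, ψ (i - j) = ∑ d ∈ Icc 1 M, (M - d) • ψ d := by
  have hreflect : ∀ i ∈ Icc 1 M, ∑ j ∈ Icc 1 M with j < i, ψ (i - j) = ∑ d ∈ Ico 1 i, ψ d := by
    intro i hi
    rw [mem_Icc] at hi
    refine sum_nbij' (i - ·) (i - ·) ?_ ?_ ?_ ?_ ?_ <;> intro j hj <;>
      simp only [mem_filter, mem_Icc, mem_Ico] at hj ⊢ <;> omega
  rw [sum_congr rfl hreflect, sum_comm' (t' := Icc 1 M) (s' := fun d => Ioc d M)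
    (by intro i d; simp only [mem_Icc, mem_Ico, mem_Ioc]; omega)]
  simp [sum_const, Nat.card_Ioc]

theorem Complex.sq_norm_sum {ι : Type*} (s : Finset ι) (x : ι → ℂ) :
    ‖∑ i ∈ s, x i‖ ^ 2 = ∑ i ∈ s, ∑ j ∈ s, (x i * conj (x j)).re := by
  rw [← ofReal_re (‖_‖ ^ 2), ofReal_pow, ← mul_conj', map_sum, sum_mul_sum, re_sum]
  simp only [re_sum]

theorem Complex.re_mul_conj_comm (z w : ℂ) : (z * conj w).re = (w * conj z).re := by
  simp only [mul_re, conj_re, conj_im]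
  ring

/-- For `u = e ∘ f` this is the paper's `s'_h(L)`. -/
noncomputable def autocorrelation (u : ℤ → ℂ) (N : ℤ) (L : ℕ) (h : ℤ) : ℂ :=
  ∑ r ∈ Icc (N + 1) (N + L - h), u (h + r) * conj (u r)

section VanDerCorput

variable (u : ℤ → ℂ) (N : ℤ) (L : ℕ)

theorem re_autocorrelation_zero :
    (autocorrelation u N L 0).re = ∑ n ∈ Icc (N + 1) (N + L), ‖u n‖ ^ 2 := by
  simp [autocorrelation, re_sum, mul_conj', ← ofReal_pow]

theorem sum_indicator_Icc_add {a b k : ℤ} (ha : a + k ≤ N + 1) (hb : N + L ≤ b + k) :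
    ∑ x ∈ Icc a b, (Icc (N + 1) (N + L : ℤ) : Set ℤ).indicator u (x + k)
      = ∑ n ∈ Icc (N + 1) (N + L), u n := by
  rw [sum_Icc_add', sum_indicator_subset _ (Icc_subset_Icc ha hb)]

theorem indicator_Icc_add_mul_conj {d : ℤ} (hd : 0 ≤ d) (y : ℤ) :
    (Icc (N + 1) (N + L : ℤ) : Set ℤ).indicator u (y + d)
        * conj ((Icc (N + 1) (N + L : ℤ) : Set ℤ).indicator u y)
      = (Icc (N + 1) (N + L - d) : Set ℤ).indicator (fun r => u (d + r) * conj (u r)) y := by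
  simp only [Set.indicator, coe_Icc, Set.mem_Icc]
  split_ifs <;> first | omega | simp [add_comm]

theorem sum_indicator_Icc_add_mul_conj {a b k l : ℤ} (hlk : l ≤ k) (ha : a + l ≤ N + 1)
    (hb : N + L ≤ b + k) :
    ∑ x ∈ Icc a b, (Icc (N + 1) (N + L : ℤ) : Set ℤ).indicator u (x + k)
        * conj ((Icc (N + 1) (N + L : ℤ) : Set ℤ).indicator u (x + l))
      = autocorrelation u N L (k - l) := by
  have hshift : ∀ x, x + k = x + l + (k - l) := fun x => by ring
  simp_rw [hshift]
  rw [sum_Icc_add' (fun y => (Icc (N + 1) (N + L : ℤ) : Set ℤ).indicator u (y + (k - l))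
      * conj ((Icc (N + 1) (N + L : ℤ) : Set ℤ).indicator u y))]
  simp_rw [indicator_Icc_add_mul_conj u N L (sub_nonneg.2 hlk)]
  exact sum_indicator_subset _ (Icc_subset_Icc ha (by omega))

theorem sum_sq_norm_sum_indicator_shifts_le (M : ℕ) :
    ∑ a ∈ Icc (N + 1 - M) (N + L - 1),
        ‖∑ m ∈ Icc 1 M, (Icc (N + 1) (N + L : ℤ) : Set ℤ).indicator u (a + m)‖ ^ 2
      ≤ M * ∑ n ∈ Icc (N + 1) (N + L), ‖u n‖ ^ 2
        + 2 * ∑ m ∈ Icc 1 M, ((M : ℝ) - m) * ‖autocorrelation u N L m‖ := by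
  set φ : ℕ → ℕ → ℝ := fun i j => (∑ a ∈ Icc (N + 1 - M) (N + L - 1),
    (Icc (N + 1) (N + L : ℤ) : Set ℤ).indicator u (a + i)
      * conj ((Icc (N + 1) (N + L : ℤ) : Set ℤ).indicator u (a + j))).re with hφ
  have hdiag : ∀ i ∈ Icc 1 M, φ i i = ∑ n ∈ Icc (N + 1) (N + L), ‖u n‖ ^ 2 := by
    intro i hi
    rw [mem_Icc] at hi
    simp only [hφ]
    rw [sum_indicator_Icc_add_mul_conj u N L le_rfl (by omega) (by omega), sub_self,
      re_autocorrelation_zero]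
  have hoff : ∀ i ∈ Icc 1 M, ∀ j ∈ {j ∈ Icc 1 M | j < i},
      φ i j ≤ ‖autocorrelation u N L (i - j : ℕ)‖ := by
    intro i hi j hj
    simp only [mem_filter, mem_Icc] at hi hj
    simp only [hφ]
    rw [sum_indicator_Icc_add_mul_conj u N L (by omega) (by omega) (by omega),
      Nat.cast_sub hj.2.le]
    exact re_le_norm _
  calc _ = ∑ i ∈ Icc 1 M, ∑ j ∈ Icc 1 M, φ i j := by
        simp_rw [hφ, sq_norm_sum, re_sum]
        rw [sum_comm]
        exact sum_congr rfl fun _ _ => sum_comm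
    _ = ∑ i ∈ Icc 1 M, φ i i + 2 * ∑ i ∈ Icc 1 M, ∑ j ∈ Icc 1 M with j < i, φ i j :=
        sum_sum_eq_sum_diag_add_two_mul _ φ fun i j => by
          simp only [hφ, re_sum]
          exact sum_congr rfl fun _ _ => re_mul_conj_comm _ _
    _ ≤ M * ∑ n ∈ Icc (N + 1) (N + L), ‖u n‖ ^ 2
          + 2 * ∑ i ∈ Icc 1 M, ∑ j ∈ Icc 1 M with j < i, ‖autocorrelation u N L (i - j : ℕ)‖ := by
        rw [sum_congr rfl hdiag, sum_const, Nat.card_Icc, nsmul_eq_mul, add_tsub_cancel_right]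
        gcongr with i hi j hj
        exact hoff i hi j hj
    _ = M * ∑ n ∈ Icc (N + 1) (N + L), ‖u n‖ ^ 2
          + 2 * ∑ m ∈ Icc 1 M, ((M : ℝ) - m) * ‖autocorrelation u N L m‖ := by
        rw [sum_Icc_sum_lt_sub_eq_sum_nsmul M fun d => ‖autocorrelation u N L d‖]
        congr 2
        refine sum_congr rfl fun m hm => ?_
        rw [nsmul_eq_mul, Nat.cast_sub (mem_Icc.1 hm).2]

theorem norm_sum_sq_le_van_der_corput {M : ℕ} (hM : 0 < M) :
    ‖∑ n ∈ Icc (N + 1) (N + L), u n‖ ^ 2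
      ≤ ((L + M - 1 : ℝ) / M) * (∑ n ∈ Icc (N + 1) (N + L), ‖u n‖ ^ 2
        + 2 * ∑ m ∈ Icc 1 M, (1 - (m : ℝ) / M) * ‖autocorrelation u N L m‖) := by
  set W := Icc (N + 1 - M) (N + L - 1)
  set G : ℤ → ℂ := fun a => ∑ m ∈ Icc 1 M, (Icc (N + 1) (N + L : ℤ) : Set ℤ).indicator u (a + m)
  have hM' : (0 : ℝ) < M := Nat.cast_pos.2 hM
  have hW : (#W : ℝ) = L + M - 1 := by
    have : #W + 1 = L + M := by simp only [W, Int.card_Icc]; omega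
    rw [eq_sub_iff_add_eq]
    exact_mod_cast this
  have hG : (M : ℂ) * ∑ n ∈ Icc (N + 1) (N + L), u n = ∑ a ∈ W, G a := by
    rw [sum_comm, sum_congr rfl fun m hm => sum_indicator_Icc_add u N L
      (by rw [mem_Icc] at hm; omega) (by rw [mem_Icc] at hm; omega),
      sum_const, Nat.card_Icc, add_tsub_cancel_right, nsmul_eq_mul]
  have hweights : (∑ m ∈ Icc 1 M, (1 - (m : ℝ) / M) * ‖autocorrelation u N L m‖) * M
      = ∑ m ∈ Icc 1 M, ((M : ℝ) - m) * ‖autocorrelation u N L m‖ := by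
    rw [sum_mul]
    refine sum_congr rfl fun m _ => ?_
    field_simp
  have hsq : ((M : ℝ) * ‖∑ n ∈ Icc (N + 1) (N + L), u n‖) ^ 2
      ≤ (L + M - 1) * (M * ∑ n ∈ Icc (N + 1) (N + L), ‖u n‖ ^ 2
        + 2 * ∑ m ∈ Icc 1 M, ((M : ℝ) - m) * ‖autocorrelation u N L m‖) := by
    calc ((M : ℝ) * ‖∑ n ∈ Icc (N + 1) (N + L), u n‖) ^ 2
        = ‖∑ a ∈ W, G a‖ ^ 2 := by rw [← hG, norm_mul, Complex.norm_natCast]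
      _ ≤ (∑ a ∈ W, ‖G a‖) ^ 2 := by gcongr; exact norm_sum_le _ _
      _ ≤ #W * ∑ a ∈ W, ‖G a‖ ^ 2 := sq_sum_le_card_mul_sum_sq
      _ ≤ _ := by
        rw [hW]
        gcongr
        · linarith [hM']
        · exact sum_sq_norm_sum_indicator_shifts_le u N L M
  rw [← hweights] at hsq
  rw [div_mul_eq_mul_div, le_div_iff₀ hM']
  refine le_of_mul_le_mul_left ?_ hM'
  linear_combination hsq

end VanDerCorput

theorem exp_two_pi_I_mul_conj (x y : ℝ) :
    exp (2 * π * I * x) * conj (exp (2 * π * I * y)) = exp (2 * π * I * (x - y)) := by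
  rw [← exp_conj, ← Complex.exp_add]
  congr 1
  simp only [map_mul, conj_I, conj_ofReal, map_ofNat]
  ring

theorem norm_exp_two_pi_I_mul (x : ℝ) : ‖exp (2 * π * I * x)‖ = 1 := by
  rw [norm_exp]
  simp

theorem stmt_13_general (N : ℤ) (L M : ℕ) (hM : 0 < M) (f : ℤ → ℝ) :
    ‖(∑ n ∈ Finset.Icc (N + 1) (N + L), Complex.exp (2 * π * Complex.I * (f n)))‖ ^ 2
      ≤ ((L + M - 1 : ℝ) / M) *
        ((L : ℝ) + 2 * ∑ m ∈ Finset.Icc 1 M, (1 - (m : ℝ) / M) *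
          ‖(∑ r ∈ Finset.Icc (N + 1) (N + L - m),
            Complex.exp (2 * π * Complex.I * (f (m + r) - f r)))‖) := by
  have hvdc := norm_sum_sq_le_van_der_corput (fun n => exp (2 * π * I * f n)) N L hM
  have hmass : ∑ n ∈ Icc (N + 1) (N + L), ‖exp (2 * π * I * f n)‖ ^ 2 = L := by
    simp only [norm_exp_two_pi_I_mul, one_pow, sum_const, Int.card_Icc, nsmul_one]
    norm_cast
    omega
  simpa only [autocorrelation, exp_two_pi_I_mul_conj, hmass] using hvdc

theorem stmt_13 (N : ℤ) (L M : ℕ) (hL : 0 < L) (hM : 0 < M) (f : ℤ → ℝ) :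
    ‖(∑ n ∈ Finset.Icc (N + 1) (N + L), Complex.exp (2 * π * Complex.I * (f n)))‖ ^ 2
      ≤ ((L + M - 1 : ℝ) / M) *
        ((L : ℝ) + 2 * ∑ m ∈ Finset.Icc 1 M, (1 - (m : ℝ) / M) *
          ‖(∑ r ∈ Finset.Icc (N + 1) (N + L - m),
            Complex.exp (2 * π * Complex.I * (f (m + r) - f r)))‖) :=
  stmt_13_general N L M hM f
end

section
/- Let f : [a,b] → ℝ have a monotonic continuous derivative on [a,b] satisfying z + U ≤ f'(x) ≤ z + V for all x ∈ [a,b], where z is an integer and 0 < U ≤ V < 1. Then |∑_{a ≤ n ≤ b} e(f(n))| ≤ (1/π)·(1/U + 1/(1−V)). -/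
/-!
Write `c n = 𝐞 (f n)`. By the mean value theorem `f (n + 1) - f n - z = θ n := f' (ξ n) - z` with
`ξ n ∈ (n, n + 1)`, so `θ n ∈ [U, V]` is monotone in `n` and `c (n + 1) = c n 𝐞 (θ n)`, that is
`c n = (c (n + 1) - c n) H (θ n)` with `H θ = (𝐞 θ - 1)⁻¹ = -(1 + i cot πθ) / 2`. Summation by parts
leaves two boundary terms of size `|H θ| = |H θ + 1| = 1 / (2 sin πθ)` and the sum of
`|H (θ (n + 1)) - H (θ n)|`. The points `H (θ n)` move monotonically along the line `Re = -1/2`, so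
that sum telescopes to `|cot πθ_first - cot πθ_last| / 2`, and the half-angle bound
`1 / (2 sin x) + cot x / 2 = cot (x / 2) / 2 ≤ 1 / x` and its reflection `x ↦ π - x` finish the
proof.
At the last point, where there is no step, `ξ` is the point itself.
-/

open Real Complex Finset
open scoped FourierTransform

lemma antitoneOn_cot : AntitoneOn Real.cot (Set.Ioo 0 π) := by
  intro x hx y hy hxy
  have hsx := Real.sin_pos_of_pos_of_lt_pi hx.1 hx.2
  have hsy := Real.sin_pos_of_pos_of_lt_pi hy.1 hy.2
  have hsub := Real.sin_nonneg_of_nonneg_of_le_pi (sub_nonneg.2 hxy) (by linarith [hx.1, hy.2])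
  rw [Real.sin_sub] at hsub
  rw [Real.cot_eq_cos_div_sin, Real.cot_eq_cos_div_sin, div_le_div_iff₀ hsy hsx]
  linarith

lemma inv_two_mul_sin_add_cot_div_two_le {x : ℝ} (h0 : 0 < x) (hπ : x < π) :
    (2 * Real.sin x)⁻¹ + Real.cot x / 2 ≤ x⁻¹ := by
  obtain ⟨t, rfl⟩ : ∃ t, x = 2 * t := ⟨x / 2, by ring⟩
  have hct : 0 < Real.cos t := Real.cos_pos_of_mem_Ioo ⟨by linarith, by linarith⟩
  have hst : 0 < Real.sin t := Real.sin_pos_of_pos_of_lt_pi (by linarith) (by linarith)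
  have htan : t ≤ Real.sin t / Real.cos t := by
    rw [← Real.tan_eq_sin_div_cos]; exact Real.le_tan (by linarith) (by linarith)
  rw [le_div_iff₀ hct] at htan
  have hhalf : (2 * Real.sin (2 * t))⁻¹ + Real.cot (2 * t) / 2 = Real.cos t / (2 * Real.sin t) := by
    rw [Real.cot_eq_cos_div_sin, Real.sin_two_mul, Real.cos_two_mul]
    field_simp
    ring
  rw [hhalf, ← one_div, div_le_div_iff₀ (by positivity) (by positivity)]
  linarith

lemma inv_two_mul_sin_sub_cot_div_two_le {x : ℝ} (h0 : 0 < x) (hπ : x < π) :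
    (2 * Real.sin x)⁻¹ - Real.cot x / 2 ≤ (π - x)⁻¹ := by
  have h := inv_two_mul_sin_add_cot_div_two_le (x := π - x) (by linarith) (by linarith)
  rwa [Real.cot_eq_cos_div_sin, Real.sin_pi_sub, Real.cos_pi_sub, neg_div, neg_div,
    ← sub_eq_add_neg, ← Real.cot_eq_cos_div_sin] at h

lemma sin_pi_mul_pos {θ : ℝ} (h0 : 0 < θ) (h1 : θ < 1) : 0 < Real.sin (π * θ) :=
  Real.sin_pos_of_pos_of_lt_pi (by positivity) (by nlinarith [Real.pi_pos])

lemma kuzmin_landau_endpoint_bound {U V θ θ' : ℝ} (hU : 0 < U) (hV : V < 1)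
    (hθ : θ ∈ Set.Icc U V) (hθ' : θ' ∈ Set.Icc U V) :
    (2 * Real.sin (π * θ))⁻¹ + (2 * Real.sin (π * θ'))⁻¹
        + |Real.cot (π * θ) - Real.cot (π * θ')| / 2 ≤ 1 / π * (1 / U + 1 / (1 - V)) := by
  wlog hcot : Real.cot (π * θ') ≤ Real.cot (π * θ) generalizing θ θ'
  · have := this hθ' hθ (le_of_not_ge hcot)
    rwa [add_comm (2 * Real.sin (π * θ'))⁻¹, abs_sub_comm] at this
  have hpi := Real.pi_pos
  have hleft : (2 * Real.sin (π * θ))⁻¹ + Real.cot (π * θ) / 2 ≤ (π * U)⁻¹ :=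
    (inv_two_mul_sin_add_cot_div_two_le (by nlinarith [hθ.1]) (by nlinarith [hθ.2])).trans
      (inv_anti₀ (by positivity) (by nlinarith [hθ.1]))
  have hright : (2 * Real.sin (π * θ'))⁻¹ - Real.cot (π * θ') / 2 ≤ (π * (1 - V))⁻¹ :=
    (inv_two_mul_sin_sub_cot_div_two_le (by nlinarith [hθ'.1]) (by nlinarith [hθ'.2])).trans
      (inv_anti₀ (by nlinarith) (by nlinarith [hθ'.2]))
  rw [abs_of_nonneg (sub_nonneg.2 hcot), mul_add, one_div_mul_one_div, one_div_mul_one_div,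
    one_div, one_div]
  linarith

lemma fourierChar_eq_exp (x : ℝ) : (𝐞 x : ℂ) = Complex.exp (2 * π * I * x) := by
  rw [Real.fourierChar_apply]; push_cast; ring_nf

lemma fourierChar_sub_intCast (x : ℝ) (n : ℤ) : 𝐞 (x - n) = 𝐞 x := by
  rw [AddChar.map_sub_eq_div, Real.fourierChar_apply' (n : ℝ), Circle.exp_two_pi_mul_int, div_one]

lemma norm_fourierChar_sub_one (θ : ℝ) : ‖(𝐞 θ : ℂ) - 1‖ = 2 * |Real.sin (π * θ)| := by
  rw [Real.fourierChar_apply, mul_comm, Complex.norm_exp_I_mul_ofReal_sub_one]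
  simp only [norm_mul, Real.norm_eq_abs, abs_two]
  ring_nf

lemma fourierChar_sub_one_inv {θ : ℝ} (hθ : Real.sin (π * θ) ≠ 0) :
    ((𝐞 θ : ℂ) - 1)⁻¹ = -(1 + I * Real.cot (π * θ)) / 2 := by
  refine inv_eq_of_mul_eq_one_right ?_
  have hexp : (𝐞 θ : ℂ) = Complex.exp (2 * ↑(π * θ) * I) := by
    rw [Real.fourierChar_apply]; push_cast; ring_nf
  have hx : Complex.sin ↑(π * θ) ≠ 0 := by rw [← Complex.ofReal_sin]; exact_mod_cast hθ
  rw [hexp, Complex.ofReal_cot, Complex.cot_eq_cos_div_sin, Complex.exp_mul_I,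
    Complex.cos_two_mul, Complex.sin_two_mul]
  set x : ℂ := ↑(π * θ)
  field_simp
  linear_combination (-2 * I * Complex.cos x) * Complex.sin_sq_add_cos_sq x
    - 2 * Complex.cos x ^ 2 * Complex.sin x * Complex.I_sq

lemma norm_fourierChar_sub_one_inv (θ : ℝ) :
    ‖((𝐞 θ : ℂ) - 1)⁻¹‖ = (2 * |Real.sin (π * θ)|)⁻¹ := by
  rw [norm_inv, norm_fourierChar_sub_one]

lemma norm_fourierChar_sub_one_inv_add_one {θ : ℝ} (hθ : Real.sin (π * θ) ≠ 0) :
    ‖((𝐞 θ : ℂ) - 1)⁻¹ + 1‖ = (2 * |Real.sin (π * θ)|)⁻¹ := by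
  have hne : (𝐞 θ : ℂ) - 1 ≠ 0 := by
    rw [← norm_ne_zero_iff, norm_fourierChar_sub_one]; positivity
  have h : ((𝐞 θ : ℂ) - 1)⁻¹ + 1 = 𝐞 θ * ((𝐞 θ : ℂ) - 1)⁻¹ := by field_simp; ring
  rw [← norm_fourierChar_sub_one_inv, h, norm_mul, Circle.norm_coe, one_mul]

lemma norm_fourierChar_sub_one_inv_sub {θ θ' : ℝ} (hθ : Real.sin (π * θ) ≠ 0)
    (hθ' : Real.sin (π * θ') ≠ 0) :
    ‖((𝐞 θ : ℂ) - 1)⁻¹ - ((𝐞 θ' : ℂ) - 1)⁻¹‖ = |Real.cot (π * θ) - Real.cot (π * θ')| / 2 := by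
  rw [fourierChar_sub_one_inv hθ, fourierChar_sub_one_inv hθ',
    show -(1 + I * Real.cot (π * θ)) / 2 - -(1 + I * Real.cot (π * θ')) / 2
      = ((Real.cot (π * θ') - Real.cot (π * θ)) / 2 : ℝ) * I by push_cast; ring,
    norm_mul, Complex.norm_I, mul_one, Complex.norm_real, Real.norm_eq_abs, abs_div, abs_two,
    abs_sub_comm]

lemma sum_range_succ_eq_of_eq_sub_mul {R : Type*} [CommRing R] {c H : ℕ → R} {K : ℕ}
    (h : ∀ j < K, c j = (c (j + 1) - c j) * H j) :
    ∑ j ∈ range (K + 1), c j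
      = c K * (H K + 1) - c 0 * H 0 - ∑ j ∈ range K, c (j + 1) * (H (j + 1) - H j) := by
  induction K with
  | zero => simp only [zero_add, sum_range_one, range_zero, sum_empty]; ring
  | succ K ih =>
    rw [sum_range_succ, ih fun j hj => h j (by omega), sum_range_succ]
    linear_combination h K (by omega)

lemma norm_sum_range_succ_le_of_eq_sub_mul {R : Type*} [SeminormedCommRing R] {c H : ℕ → R}
    {K : ℕ} (hc : ∀ j ≤ K, ‖c j‖ ≤ 1) (h : ∀ j < K, c j = (c (j + 1) - c j) * H j) :
    ‖∑ j ∈ range (K + 1), c j‖ ≤ ‖H K + 1‖ + ‖H 0‖ + ∑ j ∈ range K, ‖H (j + 1) - H j‖ := by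
  have hmul : ∀ {j} (x : R), j ≤ K → ‖c j * x‖ ≤ ‖x‖ := fun x hj =>
    (norm_mul_le _ _).trans (mul_le_of_le_one_left (norm_nonneg x) (hc _ hj))
  rw [sum_range_succ_eq_of_eq_sub_mul h]
  refine (norm_sub_le _ _).trans (add_le_add ((norm_sub_le _ _).trans
    (add_le_add (hmul _ le_rfl) (hmul _ (Nat.zero_le K)))) ((norm_sum_le _ _).trans ?_))
  exact sum_le_sum fun j hj => hmul _ (mem_range.1 hj)

lemma sum_range_abs_sub_of_monotoneOn_or_antitoneOn {v : ℕ → ℝ} {K : ℕ}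
    (hv : MonotoneOn v (Set.Iic K) ∨ AntitoneOn v (Set.Iic K)) :
    ∑ j ∈ range K, |v (j + 1) - v j| = |v K - v 0| := by
  have hK : K ∈ Set.Iic K := Set.mem_Iic.2 le_rfl
  have h0 : 0 ∈ Set.Iic K := Set.mem_Iic.2 (Nat.zero_le K)
  have hstep : ∀ j ∈ range K, j ∈ Set.Iic K ∧ j + 1 ∈ Set.Iic K := fun j hj => by
    simp only [mem_range] at hj; exact ⟨Set.mem_Iic.2 (by omega), Set.mem_Iic.2 (by omega)⟩
  rcases hv with hv | hv
  · rw [abs_of_nonneg (sub_nonneg.2 (hv h0 hK (Nat.zero_le K))), ← sum_range_sub]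
    refine sum_congr rfl fun j hj => abs_of_nonneg (sub_nonneg.2 ?_)
    exact hv (hstep j hj).1 (hstep j hj).2 (Nat.le_succ j)
  · rw [abs_of_nonpos (sub_nonpos.2 (hv h0 hK (Nat.zero_le K))), neg_sub, ← sum_range_sub']
    refine sum_congr rfl fun j hj => ?_
    rw [abs_sub_comm, abs_of_nonneg (sub_nonneg.2 ?_)]
    exact hv (hstep j hj).1 (hstep j hj).2 (Nat.le_succ j)

theorem kuzmin_landau_of_fourierChar_steps {K : ℕ} {c : ℕ → ℂ} {θ : ℕ → ℝ} {U V : ℝ}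
    (hU : 0 < U) (hV : V < 1) (hc : ∀ j ≤ K, ‖c j‖ = 1)
    (hstep : ∀ j < K, c (j + 1) = c j * 𝐞 (θ j)) (hθ : ∀ j ≤ K, θ j ∈ Set.Icc U V)
    (hmono : MonotoneOn θ (Set.Iic K) ∨ AntitoneOn θ (Set.Iic K)) :
    ‖∑ j ∈ range (K + 1), c j‖ ≤ 1 / π * (1 / U + 1 / (1 - V)) := by
  have hsin : ∀ j ≤ K, 0 < Real.sin (π * θ j) := fun j hj =>
    sin_pi_mul_pos (hU.trans_le (hθ j hj).1) ((hθ j hj).2.trans_lt hV)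
  set H : ℕ → ℂ := fun j => ((𝐞 (θ j) : ℂ) - 1)⁻¹
  have hrec : ∀ j < K, c j = (c (j + 1) - c j) * H j := fun j hj => by
    have hne : (𝐞 (θ j) : ℂ) - 1 ≠ 0 := by
      rw [← norm_ne_zero_iff, norm_fourierChar_sub_one]
      exact mul_ne_zero two_ne_zero (abs_pos.2 (hsin j hj.le).ne').ne'
    rw [hstep j hj, ← mul_sub_one, mul_assoc, mul_inv_cancel₀ hne, mul_one]
  have hcot : MonotoneOn (fun j => Real.cot (π * θ j)) (Set.Iic K)
      ∨ AntitoneOn (fun j => Real.cot (π * θ j)) (Set.Iic K) := by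
    have hanti : AntitoneOn (fun t => Real.cot (π * t)) (Set.Ioo 0 1) :=
      antitoneOn_cot.comp_MonotoneOn (fun _ _ _ _ h => by gcongr) fun t ht =>
        ⟨by nlinarith [Real.pi_pos, ht.1], by nlinarith [Real.pi_pos, ht.2]⟩
    have hmaps : Set.MapsTo θ (Set.Iic K) (Set.Ioo 0 1) := fun j hj =>
      ⟨hU.trans_le (hθ j hj).1, (hθ j hj).2.trans_lt hV⟩
    exact hmono.symm.imp (hanti.comp · hmaps) (hanti.comp_MonotoneOn · hmaps)
  calc ‖∑ j ∈ range (K + 1), c j‖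
      ≤ ‖H K + 1‖ + ‖H 0‖ + ∑ j ∈ range K, ‖H (j + 1) - H j‖ :=
        norm_sum_range_succ_le_of_eq_sub_mul (fun j hj => (hc j hj).le) hrec
    _ = (2 * Real.sin (π * θ K))⁻¹ + (2 * Real.sin (π * θ 0))⁻¹
          + ∑ j ∈ range K, |Real.cot (π * θ (j + 1)) - Real.cot (π * θ j)| / 2 := by
        have hK := hsin K le_rfl
        rw [norm_fourierChar_sub_one_inv_add_one hK.ne', norm_fourierChar_sub_one_inv,
          abs_of_pos hK, abs_of_pos (hsin 0 (Nat.zero_le K))]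
        refine congrArg _ (sum_congr rfl fun j hj => ?_)
        rw [mem_range] at hj
        exact norm_fourierChar_sub_one_inv_sub (hsin _ hj).ne' (hsin _ hj.le).ne'
    _ = (2 * Real.sin (π * θ K))⁻¹ + (2 * Real.sin (π * θ 0))⁻¹
          + |Real.cot (π * θ K) - Real.cot (π * θ 0)| / 2 := by
        rw [← sum_div, sum_range_abs_sub_of_monotoneOn_or_antitoneOn hcot]
    _ ≤ 1 / π * (1 / U + 1 / (1 - V)) :=
        kuzmin_landau_endpoint_bound hU hV (hθ K le_rfl) (hθ 0 (Nat.zero_le K))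

lemma exists_monotone_mean_value_points {f f' : ℝ → ℝ} {x₀ : ℝ} {K : ℕ}
    (hf : ∀ x ∈ Set.Icc x₀ (x₀ + K), HasDerivAt f (f' x) x) :
    ∃ ξ : ℕ → ℝ, Monotone ξ ∧ (∀ j, ξ j ∈ Set.Icc x₀ (x₀ + K)) ∧
      ∀ j < K, f (x₀ + (j + 1 : ℕ)) - f (x₀ + j) = f' (ξ j) := by
  have hmvt : ∀ j < K, ∃ x ∈ Set.Ioo (x₀ + j) (x₀ + (j + 1 : ℕ)),
      f' x = (f (x₀ + (j + 1 : ℕ)) - f (x₀ + j)) / ((x₀ + (j + 1 : ℕ)) - (x₀ + j)) := by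
    intro j hj
    have hsub : Set.Icc (x₀ + j) (x₀ + (j + 1 : ℕ)) ⊆ Set.Icc x₀ (x₀ + K) :=
      Set.Icc_subset_Icc (by simp) (by gcongr; exact_mod_cast hj)
    exact exists_hasDerivAt_eq_slope f f' (by push_cast; linarith)
      (fun x hx => (hf x (hsub hx)).continuousAt.continuousWithinAt)
      (fun x hx => hf x (hsub (Set.Ioo_subset_Icc_self hx)))
  choose ξ hξ hslope using hmvt
  set ξ' : ℕ → ℝ := fun j => if h : j < K then ξ j h else x₀ + K
  have hloc : ∀ j, ξ' j ∈ Set.Icc (x₀ + (min j K : ℕ)) (x₀ + (min (j + 1) K : ℕ)) := by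
    intro j
    by_cases hj : j < K
    · simp only [ξ', dif_pos hj, min_eq_left hj.le, min_eq_left (Nat.succ_le_of_lt hj)]
      exact Set.Ioo_subset_Icc_self (hξ j hj)
    · have hKj := not_lt.1 hj
      simp only [ξ', dif_neg hj, min_eq_right hKj, min_eq_right (Nat.le_succ_of_le hKj)]
      exact Set.left_mem_Icc.2 le_rfl
  refine ⟨ξ', monotone_nat_of_le_succ fun j => (hloc j).2.trans (hloc (j + 1)).1,
    fun j => ⟨?_, ?_⟩, fun j hj => ?_⟩
  · linarith [(hloc j).1, (Nat.cast_nonneg (min j K) : (0 : ℝ) ≤ _)]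
  · have : ((min (j + 1) K : ℕ) : ℝ) ≤ K := by exact_mod_cast min_le_right _ _
    linarith [(hloc j).2]
  · simp only [ξ', dif_pos hj, hslope j hj]
    push_cast
    ring

theorem stmt_14_general (a b : ℝ) (f f' : ℝ → ℝ)
    (hderiv : ∀ x ∈ Set.Icc a b, HasDerivAt f (f' x) x)
    (hmono : MonotoneOn f' (Set.Icc a b) ∨ AntitoneOn f' (Set.Icc a b))
    (z : ℤ) (U V : ℝ) (hU : 0 < U) (hV : V < 1)
    (hbound : ∀ x ∈ Set.Icc a b, z + U ≤ f' x ∧ f' x ≤ z + V) :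
    ‖∑ n ∈ Finset.Icc ⌈a⌉ ⌊b⌋, Complex.exp (2 * π * Complex.I * (f n))‖
      ≤ (1 / π) * (1 / U + 1 / (1 - V)) := by
  rcases lt_or_ge ⌊b⌋ ⌈a⌉ with hempty | hle
  · rw [Finset.Icc_eq_empty_of_lt hempty, sum_empty, norm_zero]
    have := sub_pos.2 hV
    positivity
  obtain ⟨K, hK⟩ : ∃ K : ℕ, ⌊b⌋ = ⌈a⌉ + K := ⟨(⌊b⌋ - ⌈a⌉).toNat, by omega⟩
  have hsub : Set.Icc (⌈a⌉ : ℝ) (⌈a⌉ + K) ⊆ Set.Icc a b := Set.Icc_subset_Icc (Int.le_ceil a)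
    (by exact_mod_cast hK ▸ Int.floor_le b)
  obtain ⟨ξ, hξ, hξmem, hslope⟩ :=
    exists_monotone_mean_value_points fun x hx => hderiv x (hsub hx)
  rw [Int.Icc_eq_finset_map, sum_map, hK, show (⌈a⌉ + K + 1 - ⌈a⌉).toNat = K + 1 by omega]
  simp only [Function.Embedding.trans_apply, Nat.castEmbedding_apply, addLeftEmbedding_apply,
    Int.cast_add, Int.cast_natCast, ← fourierChar_eq_exp]
  have hθ : ∀ j, f' (ξ j) - z ∈ Set.Icc U V := fun j => by
    have := hbound (ξ j) (hsub (hξmem j))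
    constructor <;> linarith
  refine kuzmin_landau_of_fourierChar_steps hU hV (fun j _ => Circle.norm_coe _)
    (fun j hj => ?_) (fun j _ => hθ j) ?_
  · have hphase : f (⌈a⌉ + j) + (f' (ξ j) - z) = f (⌈a⌉ + (j + 1 : ℕ)) - z := by
      rw [← hslope j hj]; ring
    rw [← Circle.coe_mul, ← AddChar.map_add_eq_mul, hphase, fourierChar_sub_intCast]
  · refine hmono.imp (fun h i _ j _ hij => ?_) (fun h i _ j _ hij => ?_) <;>
      exact sub_le_sub_right (h (hsub (hξmem _)) (hsub (hξmem _)) (hξ hij)) _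

theorem stmt_14 (a b : ℝ) (hab : a ≤ b) (f f' : ℝ → ℝ)
    (hderiv : ∀ x ∈ Set.Icc a b, HasDerivAt f (f' x) x)
    (hcont : ContinuousOn f' (Set.Icc a b))
    (hmono : MonotoneOn f' (Set.Icc a b) ∨ AntitoneOn f' (Set.Icc a b))
    (z : ℤ) (U V : ℝ) (hU : 0 < U) (hUV : U ≤ V) (hV : V < 1)
    (hbound : ∀ x ∈ Set.Icc a b, z + U ≤ f' x ∧ f' x ≤ z + V) :
    ‖∑ n ∈ Finset.Icc ⌈a⌉ ⌊b⌋, Complex.exp (2 * π * Complex.I * (f n))‖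
      ≤ (1 / π) * (1 / U + 1 / (1 - V)) :=
  stmt_14_general a b f f' hderiv hmono z U V hU hV hbound
end

section
/- Let t ≥ 5·10^6, φ ∈ [1/3, 0.35], K = ⌈t^φ⌉, n₁ = ⌊√(t/(2π))⌋, R = ⌊n₁/K⌋, and 4 ≤ r ≤ R. Let W = π(r+1)³K³/t and let 0 < c < 3, M = ⌈c·W^(1/3)⌉. Then M ≤ K − 1. -/
/-!
Write `u = t^{1/6}`. Since `K ≥ t^{1/3} = u²` and `r ≤ R ≤ n₁/K ≤ u/√(2π)`, the cube root
`W^{1/3} = π^{1/3}(r+1)K/u²` gives `c·W^{1/3} ≤ 3π^{1/3}(u/√(2π) + 1)·K/u²`. The numerical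
inequality `3π^{1/3}(u/√(2π) + 1) + 2 ≤ u²`, valid once `t ≥ 2012`, turns this into
`≤ (1 - 2/u²)K ≤ K - 2`.
-/

open Real

lemma cube_rpow_one_third {x : ℝ} (hx : 0 ≤ x) : (x ^ 3) ^ ((1 : ℝ) / 3) = x := by
  simpa [one_div] using pow_rpow_inv_natCast hx (n := 3) (by norm_num)

lemma rpow_one_third_mul_cube_div {a b c : ℝ} (ha : 0 ≤ a) (hb : 0 ≤ b) (hc : 0 ≤ c) :
    (a * b ^ 3 / c) ^ ((1 : ℝ) / 3) = a ^ ((1 : ℝ) / 3) * b / c ^ ((1 : ℝ) / 3) := by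
  rw [div_rpow (by positivity) hc, mul_rpow ha (by positivity), cube_rpow_one_third hb]

lemma sqrt_div_le_rpow_div_sqrt {t K : ℝ} (ht : 0 < t) (hK : t ^ ((1 : ℝ) / 3) ≤ K) :
    √(t / (2 * π)) / K ≤ t ^ ((1 : ℝ) / 6) / √(2 * π) := by
  have hsplit : √t = t ^ ((1 : ℝ) / 3) * t ^ ((1 : ℝ) / 6) := by
    rw [sqrt_eq_rpow, ← rpow_add ht]; norm_num
  calc √(t / (2 * π)) / K ≤ √(t / (2 * π)) / t ^ ((1 : ℝ) / 3) := by gcongr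
    _ = t ^ ((1 : ℝ) / 6) / √(2 * π) := by
      rw [sqrt_div' _ (by positivity), hsplit]; field_simp

lemma floor_div_floor_sqrt_le {t K : ℝ} (ht : 0 < t) (hK : t ^ ((1 : ℝ) / 3) ≤ K) :
    (⌊(⌊√(t / (2 * π))⌋ : ℝ) / K⌋ : ℝ) ≤ t ^ ((1 : ℝ) / 6) / √(2 * π) := by
  have hK0 : 0 < K := lt_of_lt_of_le (by positivity) hK
  calc (⌊(⌊√(t / (2 * π))⌋ : ℝ) / K⌋ : ℝ) ≤ (⌊√(t / (2 * π))⌋ : ℝ) / K := Int.floor_le _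
    _ ≤ √(t / (2 * π)) / K := by gcongr; exact Int.floor_le _
    _ ≤ t ^ ((1 : ℝ) / 6) / √(2 * π) := sqrt_div_le_rpow_div_sqrt ht hK

lemma three_cbrt_pi_mul_add_two_le {t : ℝ} (ht : 2012 ≤ t) :
    3 * π ^ ((1 : ℝ) / 3) * (t ^ ((1 : ℝ) / 6) / √(2 * π) + 1) + 2 ≤ t ^ ((1 : ℝ) / 3) := by
  have ht0 : 0 < t := by linarith
  set u := t ^ ((1 : ℝ) / 6) with hu
  have hu0 : 0 < u := by positivity
  have hu2 : t ^ ((1 : ℝ) / 3) = u ^ 2 := by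
    rw [hu, ← rpow_natCast, ← rpow_mul ht0.le]; norm_num
  have hu6 : u ^ 6 = t := by
    rw [hu, ← rpow_natCast, ← rpow_mul ht0.le]; norm_num
  -- At `t = 2012` the margin is about `0.002`, hence the four-digit constants.
  have hu_ge : 3.553 ≤ u := by
    refine le_of_pow_le_pow_left₀ (n := 6) (by norm_num) hu0.le ?_
    rw [hu6]; norm_num; linarith
  have hp : π ^ ((1 : ℝ) / 3) ≤ 1.4646 := by
    rw [← cube_rpow_one_third (by norm_num : (0 : ℝ) ≤ 1.4646)]
    gcongr
    linarith [pi_lt_d4]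
  have hs : 2.5066 ≤ √(2 * π) := by
    rw [le_sqrt (by norm_num) (by positivity)]
    linarith [pi_gt_d6]
  rw [hu2]
  calc 3 * π ^ ((1 : ℝ) / 3) * (u / √(2 * π) + 1) + 2 ≤ 3 * 1.4646 * (u / 2.5066 + 1) + 2 := by
        gcongr
    _ ≤ u ^ 2 := by
      have := mul_le_mul_of_nonneg_right hu_ge hu0.le
      rw [sq]; norm_num at this ⊢; linarith

lemma mul_div_le_sub_two {A K T : ℝ} (hT : 0 < T) (hTK : T ≤ K) (hAT : A + 2 ≤ T) :
    A * K / T ≤ K - 2 := by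
  rw [div_le_iff₀ hT]
  nlinarith

theorem stmt_16_general (t φ : ℝ) (ht : 5e6 ≤ t) (hφ1 : 1 / 3 ≤ φ)
    (K n₁ R : ℤ) (hK : K = ⌈t ^ φ⌉) (hn₁ : n₁ = ⌊Real.sqrt (t / (2 * π))⌋)
    (hR : R = ⌊((n₁ : ℝ) / (K : ℝ))⌋)
    (r : ℤ) (hr1 : 4 ≤ r) (hr2 : r ≤ R)
    (W : ℝ) (hW : W = π * ((r : ℝ) + 1) ^ 3 * (K : ℝ) ^ 3 / t)
    (c : ℝ) (hc3 : c < 3)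
    (M : ℤ) (hM : M = ⌈c * W ^ ((1 : ℝ) / 3)⌉) :
    M ≤ K - 1 := by
  have ht0 : 0 < t := by linarith
  have hKt : t ^ ((1 : ℝ) / 3) ≤ K :=
    hK ▸ (rpow_le_rpow_of_exponent_le (by linarith) hφ1).trans (Int.le_ceil _)
  have hK0 : (0 : ℝ) ≤ K := (by positivity : (0 : ℝ) ≤ t ^ ((1 : ℝ) / 3)).trans hKt
  have hr0 : (0 : ℝ) ≤ r + 1 := by
    have : (4 : ℝ) ≤ r := by exact_mod_cast hr1
    linarith
  have hrR : (r : ℝ) ≤ t ^ ((1 : ℝ) / 6) / √(2 * π) :=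
    (Int.cast_le.2 hr2).trans (hR ▸ hn₁ ▸ floor_div_floor_sqrt_le ht0 hKt)
  have hWcbrt : W ^ ((1 : ℝ) / 3) = π ^ ((1 : ℝ) / 3) * ((r + 1) * K) / t ^ ((1 : ℝ) / 3) := by
    rw [hW, mul_assoc, ← mul_pow]
    exact rpow_one_third_mul_cube_div pi_pos.le (by positivity) ht0.le
  have hA : 3 * π ^ ((1 : ℝ) / 3) * (r + 1) + 2 ≤ t ^ ((1 : ℝ) / 3) :=
    calc 3 * π ^ ((1 : ℝ) / 3) * (r + 1) + 2
        ≤ 3 * π ^ ((1 : ℝ) / 3) * (t ^ ((1 : ℝ) / 6) / √(2 * π) + 1) + 2 := by gcongr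
      _ ≤ t ^ ((1 : ℝ) / 3) := three_cbrt_pi_mul_add_two_le (by linarith)
  rw [hM, Int.ceil_le]
  push_cast
  calc c * W ^ ((1 : ℝ) / 3) ≤ 3 * W ^ ((1 : ℝ) / 3) := by gcongr; rw [hWcbrt]; positivity
    _ = 3 * π ^ ((1 : ℝ) / 3) * (r + 1) * K / t ^ ((1 : ℝ) / 3) := by rw [hWcbrt]; ring
    _ ≤ K - 2 := mul_div_le_sub_two (by positivity) hKt hA
    _ ≤ K - 1 := by linarith

theorem stmt_16 (t φ : ℝ) (ht : 5e6 ≤ t) (hφ1 : 1 / 3 ≤ φ) (hφ2 : φ ≤ 0.35)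
    (K n₁ R : ℤ) (hK : K = ⌈t ^ φ⌉) (hn₁ : n₁ = ⌊Real.sqrt (t / (2 * π))⌋)
    (hR : R = ⌊((n₁ : ℝ) / (K : ℝ))⌋)
    (r : ℤ) (hr1 : 4 ≤ r) (hr2 : r ≤ R)
    (W : ℝ) (hW : W = π * ((r : ℝ) + 1) ^ 3 * (K : ℝ) ^ 3 / t)
    (c : ℝ) (hc0 : 0 < c) (hc3 : c < 3)
    (M : ℤ) (hM : M = ⌈c * W ^ ((1 : ℝ) / 3)⌉) :
    M ≤ K - 1 :=
  stmt_16_general t φ ht hφ1 K n₁ R hK hn₁ hR r hr1 hr2 W hW c hc3 M hM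
end
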